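/- Let α ∈ [5π/8, 2π/3] and define the diagonal operator ρ on H_3^{⊗4} with entry at position (j_1,...,j_4) equal to (k_0! k_1! k_2!/4!)·p_{k_0,k_1,k_2}, where k_i counts occurrences of i, and p_{4,0,0}=p_{0,0,4}=p_{0,4,0}=1, p_{0,2,2}=p_{2,2,0}=2, p_{0,1,3}=p_{3,1,0}=p_{0,3,1}=p_{1,3,0}=−2 cos α, p_{1,1,2}=p_{2,1,1}=2 cos 3α, p_{2,0,2}=−2 cos 4α, and all other p's are 0. Then ρ is a nonzero positive semidefinite operator orthogonal (in Hilbert-Schmidt inner product) to every B_1⊗B_2⊗B_3⊗B_4 with B_i ∈ {A_1, A_2}, where A_1 = diag(1, e^{iα}, 0) and A_2 = diag(0, 1, e^{iα}). -/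

import Mathlib

open Matrix
open scoped ComplexOrder

/-- The `N`-fold tensor (Kronecker) power: the tensor product `A 0 ⊗ ⋯ ⊗ A (N-1)`
realized as a matrix indexed by `Fin N → Fin d`. -/
noncomputable def tensorProd {d N : ℕ} (A : Fin N → Matrix (Fin d) (Fin d) ℂ) :
    Matrix (Fin N → Fin d) (Fin N → Fin d) ℂ :=
  fun j k => ∏ i, A i (j i) (k i)

/-- Number of occurrences of the value `i` in the index tuple `j`. -/
def occCount {N : ℕ} (j : Fin N → Fin 3) (i : Fin 3) : ℕ :=
  (Finset.univ.filter fun t => j t = i).card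

/-- The coefficients `p_{k₀,k₁,k₂}` for `N = 4`. -/
noncomputable def p4 (α : ℝ) : ℕ → ℕ → ℕ → ℝ
  | 4, 0, 0 => 1
  | 0, 0, 4 => 1
  | 0, 4, 0 => 1
  | 0, 2, 2 => 2
  | 2, 2, 0 => 2
  | 0, 1, 3 => -2 * Real.cos α
  | 3, 1, 0 => -2 * Real.cos α
  | 0, 3, 1 => -2 * Real.cos α
  | 1, 3, 0 => -2 * Real.cos α
  | 1, 1, 2 => 2 * Real.cos (3 * α)
  | 2, 1, 1 => 2 * Real.cos (3 * α)
  | 2, 0, 2 => -2 * Real.cos (4 * α)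
  | _, _, _ => 0

/-! `ρ` is diagonal, and for `α ∈ [5π/8, 2π/3]` the signs `cos α ≤ 0`, `cos 3α ≥ 0`,
`cos 4α ≤ 0` make every `p_{k₀,k₁,k₂}`, hence every entry of `ρ`, nonnegative. A tensor
product of diagonal matrices is diagonal, so `tr((B₁ ⊗ ⋯ ⊗ B₄)ᴴ ρ)` is a weighted sum of
products of conjugated diagonal entries. Writing `u = e^{-iα}` and `2 cos nα = uⁿ + u⁻ⁿ`,
each of the 16 sums is a Laurent polynomial in `u` that vanishes identically. -/

lemma tensorProd_diagonal {d N : ℕ} (b : Fin N → Fin d → ℂ) :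
    tensorProd (fun t => diagonal (b t)) = diagonal fun j => ∏ t, b t (j t) := by
  ext j k
  rcases eq_or_ne j k with rfl | h
  · simp [tensorProd]
  · obtain ⟨t, ht⟩ := Function.ne_iff.mp h
    simp [tensorProd, diagonal_apply_ne _ h, Finset.prod_eq_zero (Finset.mem_univ t), ht]

lemma trace_conjTranspose_diagonal_mul_diagonal {n R : Type*} [Fintype n] [DecidableEq n]
    [Semiring R] [StarRing R] (x w : n → R) :
    ((diagonal x)ᴴ * diagonal w).trace = ∑ j, star (x j) * w j := by
  simp [diagonal_conjTranspose, diagonal_mul_diagonal, trace_diagonal]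

lemma Fintype.sum_fun_fin_succ {α M : Type*} [Fintype α] [AddCommMonoid M] {n : ℕ}
    (f : (Fin (n + 1) → α) → M) :
    ∑ x, f x = ∑ a, ∑ x : Fin n → α, f (vecCons a x) := by
  rw [← (Fin.consEquiv fun _ => α).sum_comp, Fintype.sum_prod_type]
  rfl

lemma occCount_vecCons {N : ℕ} (a : Fin 3) (j : Fin N → Fin 3) (i : Fin 3) :
    occCount (vecCons a j) i = (if a = i then 1 else 0) + occCount j i := by
  simp only [occCount, Finset.card_filter, Fin.sum_univ_succ, cons_val_zero, cons_val_succ]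
  rfl

lemma occCount_fin_zero (j : Fin 0 → Fin 3) (i : Fin 3) : occCount j i = 0 := by
  simp [occCount]

lemma cos_signs_of_mem_Icc {α : ℝ} (hα : α ∈ Set.Icc (5 * Real.pi / 8) (2 * Real.pi / 3)) :
    Real.cos α ≤ 0 ∧ 0 ≤ Real.cos (3 * α) ∧ Real.cos (4 * α) ≤ 0 := by
  obtain ⟨hαl, hαu⟩ := hα
  have hπ := Real.pi_pos
  refine ⟨Real.cos_nonpos_of_pi_div_two_le_of_le (by linarith) (by linarith), ?_, ?_⟩
  · rw [← Real.cos_sub_two_pi]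
    exact Real.cos_nonneg_of_mem_Icc ⟨by linarith, by linarith⟩
  · rw [← Real.cos_sub_two_pi]
    exact Real.cos_nonpos_of_pi_div_two_le_of_le (by linarith) (by linarith)

lemma p4_nonneg {α : ℝ} (hα : α ∈ Set.Icc (5 * Real.pi / 8) (2 * Real.pi / 3))
    (k₀ k₁ k₂ : ℕ) : 0 ≤ p4 α k₀ k₁ k₂ := by
  obtain ⟨h₁, h₃, h₄⟩ := cos_signs_of_mem_Icc hα
  unfold p4
  split <;> linarith

noncomputable def rhoDiag (α : ℝ) (j : Fin 4 → Fin 3) : ℝ :=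
  ((occCount j 0).factorial * (occCount j 1).factorial * (occCount j 2).factorial : ℝ) /
    (Nat.factorial 4 : ℝ) * p4 α (occCount j 0) (occCount j 1) (occCount j 2)

lemma rhoDiag_nonneg {α : ℝ} (hα : α ∈ Set.Icc (5 * Real.pi / 8) (2 * Real.pi / 3))
    (j : Fin 4 → Fin 3) : 0 ≤ rhoDiag α j :=
  mul_nonneg (by positivity) (p4_nonneg hα _ _ _)

lemma rhoDiag_zero (α : ℝ) : rhoDiag α 0 = 1 := by
  have h₀ : occCount (0 : Fin 4 → Fin 3) 0 = 4 := by decide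
  have h₁ : occCount (0 : Fin 4 → Fin 3) 1 = 0 := by decide
  have h₂ : occCount (0 : Fin 4 → Fin 3) 2 = 0 := by decide
  simp [rhoDiag, h₀, h₁, h₂, p4, Nat.factorial_ne_zero]

set_option maxHeartbeats 1000000 in
lemma sum_prod_mul_rhoDiag_eq_zero {α : ℝ} {u : ℂ} (hu : u ≠ 0)
    (hcos : ∀ n : ℕ, (Real.cos (n * α) : ℂ) = (u ^ n + u⁻¹ ^ n) / 2)
    (c : Fin 4 → Fin 3 → ℂ) (hc : ∀ t, c t = ![1, u, 0] ∨ c t = ![0, 1, u]) :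
    ∑ j, (∏ t, c t (j t)) * rhoDiag α j = 0 := by
  have h₁ : (Real.cos α : ℂ) = (u + u⁻¹) / 2 := by simpa using hcos 1
  have h₃ : (Real.cos (3 * α) : ℂ) = (u ^ 3 + u⁻¹ ^ 3) / 2 := by simpa using hcos 3
  have h₄ : (Real.cos (4 * α) : ℂ) = (u ^ 4 + u⁻¹ ^ 4) / 2 := by simpa using hcos 4
  simp only [Fintype.sum_fun_fin_succ, Fin.prod_univ_four, Fin.sum_univ_three, rhoDiag,
    occCount_vecCons, occCount_fin_zero]
  rcases hc 0 with hc₀ | hc₀ <;> rcases hc 1 with hc₁ | hc₁ <;>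
    rcases hc 2 with hc₂ | hc₂ <;> rcases hc 3 with hc₃ | hc₃ <;>
    simp [hc₀, hc₁, hc₂, hc₃, p4, Nat.factorial, h₁, h₃, h₄] <;> field_simp <;> ring

open Complex in
lemma star_exp_ofReal_mul_I (α : ℝ) : star (exp (α * I)) = exp (-(α * I)) := by
  rw [star_def, ← exp_conj]
  simp

open Complex in
lemma ofReal_cos_nat_mul (α : ℝ) (n : ℕ) :
    (Real.cos (n * α) : ℂ) = (exp (-(α * I)) ^ n + (exp (-(α * I)))⁻¹ ^ n) / 2 := by
  rw [← exp_neg, neg_neg, ← exp_nat_mul, ← exp_nat_mul, ofReal_cos, cos]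
  push_cast
  ring_nf

/-- for `α ∈ [5π/8, 2π/3]`, the explicit diagonal operator `ρ` on
`H_3^{⊗4}` with entries `(k₀! k₁! k₂!/4!) p_{k₀,k₁,k₂}` is a nonzero positive
semidefinite operator Hilbert-Schmidt orthogonal to every `B₁ ⊗ B₂ ⊗ B₃ ⊗ B₄`
with `B_i ∈ {A_1, A_2}`. -/
theorem explicit_solution_four_copies (α : ℝ)
    (hα : α ∈ Set.Icc (5 * Real.pi / 8) (2 * Real.pi / 3))
    (A₁ A₂ : Matrix (Fin 3) (Fin 3) ℂ)
    (hA₁ : A₁ = Matrix.diagonal ![1, Complex.exp (α * Complex.I), 0])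
    (hA₂ : A₂ = Matrix.diagonal ![0, 1, Complex.exp (α * Complex.I)])
    (ρ : Matrix (Fin 4 → Fin 3) (Fin 4 → Fin 3) ℂ)
    (hρ : ρ = Matrix.diagonal fun j =>
      (((Nat.factorial (occCount j 0) * Nat.factorial (occCount j 1) *
          Nat.factorial (occCount j 2) : ℝ) / (Nat.factorial 4 : ℝ)) *
        p4 α (occCount j 0) (occCount j 1) (occCount j 2) : ℂ)) :
    ρ.PosSemidef ∧ ρ ≠ 0 ∧
      ∀ B : Fin 4 → Matrix (Fin 3) (Fin 3) ℂ,
        (∀ t, B t = A₁ ∨ B t = A₂) → ((tensorProd B)ᴴ * ρ).trace = 0 := by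
  have hρ' : ρ = diagonal fun j => (rhoDiag α j : ℂ) := by
    rw [hρ]
    simp [rhoDiag]
  subst hρ'
  refine ⟨posSemidef_diagonal_iff.2 fun j => mod_cast rhoDiag_nonneg hα j, fun h => ?_,
    fun B hB => ?_⟩
  · simpa [rhoDiag_zero] using congr_fun (congr_fun h 0) 0
  set u := Complex.exp (-(α * Complex.I))
  have hentries : ∀ t, ∃ b : Fin 3 → ℂ, B t = diagonal b ∧
      (star b = ![1, u, 0] ∨ star b = ![0, 1, u]) := by
    intro t
    rcases hB t with h | h
    · refine ⟨_, h.trans hA₁, .inl ?_⟩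
      funext i; fin_cases i <;> simp [u, star_exp_ofReal_mul_I]
    · refine ⟨_, h.trans hA₂, .inr ?_⟩
      funext i; fin_cases i <;> simp [u, star_exp_ofReal_mul_I]
  choose b hBb hb using hentries
  rw [show B = fun t => diagonal (b t) from funext hBb, tensorProd_diagonal,
    trace_conjTranspose_diagonal_mul_diagonal]
  simp only [star_prod]
  exact sum_prod_mul_rhoDiag_eq_zero (Complex.exp_ne_zero _) (ofReal_cos_nat_mul α)
    (fun t => star (b t)) hb
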